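/- Let G1 and G2 be finite digraphs without loops on disjoint nonempty vertex sets and let G = G1 × G2 be their join. For u ∈ V(G1) and v ∈ V(G2), the pair {u,v} is NOT an edge of the strong resolving graph G_SR of G (equivalently, {u,v} is an edge of the complement of G_SR) if and only if at least one of the following holds: u is a solitary vertex of G1; or v is a solitary vertex of G2; or u is an in-out-vertex of G1; or v is an in-out-vertex of G2; or u is an in-vertex of G1 and v is an in-vertex of G2; or u is an out-vertex of G1 and v is an out-vertex of G2. -/

import Mathlib

/-- There is a directed walk of length `n` from `u` to `v` in the digraph with
edge relation `E`. -/
def DWalk {V : Type*} (E : V → V → Prop) (u v : V) (n : ℕ) : Prop :=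
  ∃ f : Fin (n + 1) → V, f 0 = u ∧ f (Fin.last n) = v ∧
    ∀ i : Fin n, E (f i.castSucc) (f i.succ)

/-- The length of a shortest directed path from `u` to `v`. -/
noncomputable def ddist {V : Type*} (E : V → V → Prop) (u v : V) : ℕ :=
  sInf {n | DWalk E u v n}

/-- The digraph with edge relation `E` is strongly connected. -/
def StronglyConnected {V : Type*} (E : V → V → Prop) : Prop :=
  ∀ u v : V, ∃ n : ℕ, DWalk E u v n

/-- `u` is maximally distant to `v` (u MDT v): no in-neighbour of `u` is
farther from `v` than `u` is. -/
def MDT {V : Type*} (E : V → V → Prop) (u v : V) : Prop :=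
  ∀ u', E u' u → ddist E u' v ≤ ddist E u v

/-- `v` is maximally distant from `u` (v MDF u): no out-neighbour of `v` is
farther from `u` than `v` is. -/
def MDF {V : Type*} (E : V → V → Prop) (v u : V) : Prop :=
  ∀ v', E v v' → ddist E u v' ≤ ddist E u v

/-- `u` is mutually maximally distant to `v` (u MMDT v). -/
def MMDT {V : Type*} (E : V → V → Prop) (u v : V) : Prop :=
  MDT E u v ∧ MDF E v u

/-- The strong resolving graph of the digraph with edge relation `E`: an
undirected graph with an edge `{u,v}` iff `u ≠ v` and `u MMDT v` or `v MMDT u`. -/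
def dsrGraph {V : Type*} (E : V → V → Prop) : SimpleGraph V where
  Adj u v := u ≠ v ∧ (MMDT E u v ∨ MMDT E v u)
  symm := by
    constructor
    rintro u v ⟨h1, h2⟩
    exact ⟨h1.symm, h2.symm⟩
  loopless := by
    constructor
    rintro u ⟨h, -⟩
    exact h rfl

/-- `w` strongly resolves `u` to `v`: there is a shortest directed path from
`w` to `v` containing `u` or a shortest directed path from `u` to `w`
containing `v`. -/
def DStronglyResolves {V : Type*} (E : V → V → Prop) (w u v : V) : Prop :=
  ddist E w v = ddist E w u + ddist E u v ∨
  ddist E u w = ddist E u v + ddist E v w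

/-- `R` is a strong resolving set for the digraph with edge relation `E`. -/
def IsDStrongResolvingSet {V : Type*} (E : V → V → Prop) (R : Set V) : Prop :=
  ∀ u v : V, u ≠ v → ∃ w ∈ R, DStronglyResolves E w u v

/-- The strong metric dimension of the digraph with edge relation `E`. -/
noncomputable def dsmd {V : Type*} [Fintype V] (E : V → V → Prop) : ℕ :=
  sInf {n | ∃ R : Finset V, IsDStrongResolvingSet E ↑R ∧ R.card = n}

/-- `C` is a vertex cover of `H`. -/
def IsVertexCover {V : Type*} (H : SimpleGraph V) (C : Set V) : Prop :=
  ∀ a b : V, H.Adj a b → a ∈ C ∨ b ∈ C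

/-- The minimum size of a vertex cover of `H`. -/
noncomputable def tau {V : Type*} [Fintype V] (H : SimpleGraph V) : ℕ :=
  sInf {n | ∃ C : Finset V, IsVertexCover H ↑C ∧ C.card = n}

/-- The join of two digraphs on disjoint vertex sets: keep all edges and add
all edges in both directions between the two graphs. -/
def joinE {V1 V2 : Type*} (E1 : V1 → V1 → Prop) (E2 : V2 → V2 → Prop) :
    V1 ⊕ V2 → V1 ⊕ V2 → Prop
  | Sum.inl a, Sum.inl b => E1 a b
  | Sum.inr a, Sum.inr b => E2 a b
  | Sum.inl _, Sum.inr _ => True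
  | Sum.inr _, Sum.inl _ => True

/-- A solitary vertex: some other vertex with no edge to or from it. -/
def SolitaryVertex {V : Type*} (E : V → V → Prop) (u : V) : Prop :=
  ∃ v : V, v ≠ u ∧ ¬ E u v ∧ ¬ E v u

/-- An in-vertex: some vertex with an edge to `u` but no edge back. -/
def InVertex {V : Type*} (E : V → V → Prop) (u : V) : Prop :=
  ∃ v : V, E v u ∧ ¬ E u v

/-- An out-vertex: some vertex with an edge from `u` but no edge back. -/
def OutVertex {V : Type*} (E : V → V → Prop) (u : V) : Prop :=
  ∃ v : V, E u v ∧ ¬ E v u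

/-- An in-out-vertex: both an in-vertex and an out-vertex. -/
def InOutVertex {V : Type*} (E : V → V → Prop) (u : V) : Prop :=
  InVertex E u ∧ OutVertex E u

/-! In the join every vertex reaches every other one in at most two steps, passing through the
other side if necessary, so all distances are `0`, `1` or `2`. A vertex of `G1` is at distance `1`
from every vertex of `G2` and back, so `inl u MMDT inr v` holds exactly when `u` sends edges to all
other vertices of `G1` and `v` receives edges from all other vertices of `G2`; symmetrically for
`inr v MMDT inl u`. A vertex fails to send an edge to some other vertex iff it is an in-vertex or a
solitary vertex, and fails to receive one iff it is an out-vertex or a solitary vertex; the rest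
is propositional logic. -/

open Sum

section Distance

variable {V : Type*} {E : V → V → Prop} {u v w : V}

theorem dWalk_zero_iff : DWalk E u v 0 ↔ u = v := by
  constructor
  · rintro ⟨f, rfl, rfl, -⟩
    rfl
  · rintro rfl
    exact ⟨fun _ => u, rfl, rfl, fun i => i.elim0⟩

theorem dWalk_one_iff : DWalk E u v 1 ↔ E u v := by
  constructor
  · rintro ⟨f, rfl, rfl, hf⟩
    exact hf 0
  · intro h
    refine ⟨![u, v], rfl, rfl, fun i => ?_⟩
    fin_cases i
    simpa using h

theorem dWalk_two (h₁ : E u w) (h₂ : E w v) : DWalk E u v 2 := by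
  refine ⟨![u, w, v], rfl, rfl, fun i => ?_⟩
  fin_cases i <;> simpa

-- Without a walk from `u` to `v` the infimum is taken over `∅` and `ddist E u v = 0`.
theorem ddist_le_one_iff (h : ∃ n, DWalk E u v n) : ddist E u v ≤ 1 ↔ u = v ∨ E u v := by
  constructor
  · intro hle
    have hmem : DWalk E u v (ddist E u v) := Nat.sInf_mem h
    interval_cases hd : ddist E u v
    · exact Or.inl (dWalk_zero_iff.1 hmem)
    · exact Or.inr (dWalk_one_iff.1 hmem)
  · rintro (rfl | huv)
    · exact (Nat.sInf_le (dWalk_zero_iff.2 rfl)).trans zero_le_one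
    · exact Nat.sInf_le (dWalk_one_iff.2 huv)

theorem ddist_eq_one (hne : u ≠ v) (h : E u v) : ddist E u v = 1 := by
  have hle : ddist E u v ≤ 1 := Nat.sInf_le (dWalk_one_iff.2 h)
  have hmem : DWalk E u v (ddist E u v) :=
    Nat.sInf_mem (s := {n | DWalk E u v n}) ⟨1, dWalk_one_iff.2 h⟩
  have hpos : ddist E u v ≠ 0 := fun h0 => hne (dWalk_zero_iff.1 (h0 ▸ hmem))
  omega

end Distance

section Vertices

variable {V : Type*} {E : V → V → Prop} {u : V}

theorem not_forall_eq_or_rel_iff_inVertex_or_solitaryVertex :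
    (¬ ∀ w, u = w ∨ E u w) ↔ InVertex E u ∨ SolitaryVertex E u := by
  push Not
  constructor
  · rintro ⟨w, hne, hnot⟩
    by_cases hwu : E w u
    · exact Or.inl ⟨w, hwu, hnot⟩
    · exact Or.inr ⟨w, Ne.symm hne, hnot, hwu⟩
  · rintro (⟨w, hwu, hnot⟩ | ⟨w, hne, hnot, -⟩)
    · exact ⟨w, by rintro rfl; exact hnot hwu, hnot⟩
    · exact ⟨w, Ne.symm hne, hnot⟩

theorem not_forall_eq_or_rel_iff_outVertex_or_solitaryVertex :
    (¬ ∀ w, w = u ∨ E w u) ↔ OutVertex E u ∨ SolitaryVertex E u := by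
  push Not
  constructor
  · rintro ⟨w, hne, hnot⟩
    by_cases huw : E u w
    · exact Or.inl ⟨w, huw, hnot⟩
    · exact Or.inr ⟨w, hne, huw, hnot⟩
  · rintro (⟨w, huw, hnot⟩ | ⟨w, hne, -, hnot⟩)
    · exact ⟨w, by rintro rfl; exact hnot huw, hnot⟩
    · exact ⟨w, hne, hnot⟩

end Vertices

section Join

variable {V1 V2 : Type*} {E1 : V1 → V1 → Prop} {E2 : V2 → V2 → Prop}

theorem joinE_stronglyConnected [Nonempty V1] [Nonempty V2] :
    StronglyConnected (joinE E1 E2) := by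
  rintro (a | b) (a' | b')
  · exact ⟨2, dWalk_two (w := inr (Classical.arbitrary V2)) trivial trivial⟩
  · exact ⟨1, dWalk_one_iff.2 trivial⟩
  · exact ⟨1, dWalk_one_iff.2 trivial⟩
  · exact ⟨2, dWalk_two (w := inl (Classical.arbitrary V1)) trivial trivial⟩

theorem joinE_ddist_inl_inr (a : V1) (b : V2) : ddist (joinE E1 E2) (inl a) (inr b) = 1 :=
  ddist_eq_one inl_ne_inr trivial

theorem joinE_ddist_inr_inl (b : V2) (a : V1) : ddist (joinE E1 E2) (inr b) (inl a) = 1 :=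
  ddist_eq_one inr_ne_inl trivial

variable [Nonempty V1] [Nonempty V2]

theorem joinE_ddist_inl_inl_le_one_iff (a a' : V1) :
    ddist (joinE E1 E2) (inl a) (inl a') ≤ 1 ↔ a = a' ∨ E1 a a' := by
  rw [ddist_le_one_iff (joinE_stronglyConnected _ _), inl_injective.eq_iff]
  rfl

theorem joinE_ddist_inr_inr_le_one_iff (b b' : V2) :
    ddist (joinE E1 E2) (inr b) (inr b') ≤ 1 ↔ b = b' ∨ E2 b b' := by
  rw [ddist_le_one_iff (joinE_stronglyConnected _ _), inr_injective.eq_iff]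
  rfl

theorem joinE_mmdt_inl_inr (u : V1) (v : V2) :
    MMDT (joinE E1 E2) (inl u) (inr v) ↔ (∀ w, w = v ∨ E2 w v) ∧ (∀ w, u = w ∨ E1 u w) := by
  simp only [MMDT, MDT, MDF, Sum.forall, joinE, joinE_ddist_inl_inr, le_refl, implies_true,
    true_implies, true_and, and_true, joinE_ddist_inl_inl_le_one_iff,
    joinE_ddist_inr_inr_le_one_iff]

theorem joinE_mmdt_inr_inl (v : V2) (u : V1) :
    MMDT (joinE E1 E2) (inr v) (inl u) ↔ (∀ w, w = u ∨ E1 w u) ∧ (∀ w, v = w ∨ E2 v w) := by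
  simp only [MMDT, MDT, MDF, Sum.forall, joinE, joinE_ddist_inr_inl, le_refl, implies_true,
    true_implies, true_and, and_true, joinE_ddist_inl_inl_le_one_iff,
    joinE_ddist_inr_inr_le_one_iff]

end Join

theorem joinE_not_adj_dsrGraph_iff_general {V1 V2 : Type*}
    (E1 : V1 → V1 → Prop) (E2 : V2 → V2 → Prop)
    (u : V1) (v : V2) :
    ¬ (dsrGraph (joinE E1 E2)).Adj (Sum.inl u) (Sum.inr v) ↔
      SolitaryVertex E1 u ∨ SolitaryVertex E2 v ∨
      InOutVertex E1 u ∨ InOutVertex E2 v ∨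
      (InVertex E1 u ∧ InVertex E2 v) ∨
      (OutVertex E1 u ∧ OutVertex E2 v) := by
  have : Nonempty V1 := ⟨u⟩
  have : Nonempty V2 := ⟨v⟩
  have hadj : (dsrGraph (joinE E1 E2)).Adj (inl u) (inr v) ↔
      MMDT (joinE E1 E2) (inl u) (inr v) ∨ MMDT (joinE E1 E2) (inr v) (inl u) :=
    and_iff_right inl_ne_inr
  rw [hadj, joinE_mmdt_inl_inr, joinE_mmdt_inr_inl, not_or, not_and_or, not_and_or,
    not_forall_eq_or_rel_iff_inVertex_or_solitaryVertex,
    not_forall_eq_or_rel_iff_inVertex_or_solitaryVertex,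
    not_forall_eq_or_rel_iff_outVertex_or_solitaryVertex,
    not_forall_eq_or_rel_iff_outVertex_or_solitaryVertex, InOutVertex, InOutVertex]
  tauto

/-- in the join `G = G1 × G2` of two finite nonempty loopless
digraphs, for `u ∈ V(G1)` and `v ∈ V(G2)`, the pair `{u,v}` is NOT an edge
of `G_SR` iff `u` or `v` is solitary, `u` or `v` is an in-out-vertex,
both are in-vertices, or both are out-vertices (in their own graphs). -/
theorem joinE_not_adj_dsrGraph_iff {V1 V2 : Type*}
    [Fintype V1] [Fintype V2] [Nonempty V1] [Nonempty V2]
    (E1 : V1 → V1 → Prop) (E2 : V2 → V2 → Prop)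
    (hloop1 : ∀ x : V1, ¬ E1 x x) (hloop2 : ∀ x : V2, ¬ E2 x x)
    (u : V1) (v : V2) :
    ¬ (dsrGraph (joinE E1 E2)).Adj (Sum.inl u) (Sum.inr v) ↔
      SolitaryVertex E1 u ∨ SolitaryVertex E2 v ∨
      InOutVertex E1 u ∨ InOutVertex E2 v ∨
      (InVertex E1 u ∧ InVertex E2 v) ∨
      (OutVertex E1 u ∧ OutVertex E2 v) :=
  joinE_not_adj_dsrGraph_iff_general E1 E2 u v
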